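/- arXiv:1403.6622 — 3 statements merged into one kernel-verified Lean document; each statement's English description precedes it below -/
import Mathlib

section
/- Let f satisfy Assumption 1 and fix M ∈ ℝ^N with M_i > L_i for all i. Consider the separable quadratic approximation u_i^q(y_i;x,M_i) = f(x) + ⟨∇_i f(x), y_i − x_i⟩ + (M_i/2)‖y_i − x_i‖². Then every z ∈ 𝓛_{u^q} satisfies: (i) ∇_{(j)} f(z) = 0 for all j ∈ I(z); and (ii) for every i ∈ [N] and j ∈ 𝒮_i: |∇_{(j)} f(z)| ≤ √(2 λ_i M_i) whenever z_{(j)} = 0, and |z_{(j)}| ≥ √(2 λ_i / M_i) whenever z_{(j)} ≠ 0. -/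
open scoped RealInnerProductSpace
open Finset

/-- The weighted ℓ₀ quasinorm `‖x‖_{0,λ}`. -/
noncomputable def l0norm {n N : ℕ} (blk : Fin n → Fin N) (lam : Fin N → ℝ)
    (x : EuclideanSpace ℝ (Fin n)) : ℝ :=
  ∑ j, if x j ≠ 0 then lam (blk j) else 0

/-- Membership in `I(x) = supp(x) ∪ {j ∈ 𝒮ᵢ : λᵢ = 0}`. -/
def InIset {n N : ℕ} (blk : Fin n → Fin N) (lam : Fin N → ℝ)
    (x : EuclideanSpace ℝ (Fin n)) (j : Fin n) : Prop :=
  x j ≠ 0 ∨ lam (blk j) = 0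

/-- Block restriction `xᵢ = Uᵢᵀ x`. -/
noncomputable def blkProj {n N : ℕ} (blk : Fin n → Fin N) (i : Fin N)
    (x : EuclideanSpace ℝ (Fin n)) : EuclideanSpace ℝ {j : Fin n // blk j = i} :=
  WithLp.toLp 2 (fun j => x j.1)

/-- Block embedding `Uᵢ hᵢ`. -/
noncomputable def blkEmbed {n N : ℕ} (blk : Fin n → Fin N) (i : Fin N)
    (v : EuclideanSpace ℝ {j : Fin n // blk j = i}) : EuclideanSpace ℝ (Fin n) :=
  WithLp.toLp 2 (fun j => if h : blk j = i then v ⟨j, h⟩ else 0)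

/-- Assumption 2 on the family of approximation functions `uᵢ(·;·)`, with gradients
(in the first argument) `guᵢ`, Lipschitz constants `Mᵢ > Lᵢ` and curvature constants
`μᵢ ∈ (0, Mᵢ - Lᵢ]`. -/
structure ApproxAssumption {n N : ℕ} (blk : Fin n → Fin N)
    (f : EuclideanSpace ℝ (Fin n) → ℝ)
    (g : EuclideanSpace ℝ (Fin n) → EuclideanSpace ℝ (Fin n))
    (L : Fin N → ℝ)
    (u : ∀ i : Fin N, EuclideanSpace ℝ {j : Fin n // blk j = i} →
      EuclideanSpace ℝ (Fin n) → ℝ)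
    (gu : ∀ i : Fin N, EuclideanSpace ℝ {j : Fin n // blk j = i} →
      EuclideanSpace ℝ (Fin n) → EuclideanSpace ℝ {j : Fin n // blk j = i})
    (M μ : Fin N → ℝ) : Prop where
  strictConvexOn : ∀ i x, StrictConvexOn ℝ Set.univ (fun v => u i v x)
  hasGradient : ∀ i x v, HasGradientAt (fun w => u i w x) (gu i v x) v
  continuous_second : ∀ i v, Continuous fun x => u i v x
  value_at : ∀ i x, u i (blkProj blk i x) x = f x
  gradient_at : ∀ i x, gu i (blkProj blk i x) x = blkProj blk i (g x)
  lipschitz_grad : ∀ i x v w, ‖gu i v x - gu i w x‖ ≤ M i * ‖v - w‖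
  M_gt_L : ∀ i, L i < M i
  mu_pos : ∀ i, 0 < μ i
  mu_le : ∀ i, μ i ≤ M i - L i
  lower_bound : ∀ i x v,
    f (x + blkEmbed blk i (v - blkProj blk i x)) + μ i / 2 * ‖v - blkProj blk i x‖ ^ 2
      ≤ u i v x

/-- `z` is a `u`-strong local minimizer: `F(z) ≤ min_{yᵢ} uᵢ(yᵢ;z) + ‖z + Uᵢ(yᵢ - zᵢ)‖_{0,λ}`
for all blocks `i`. -/
def IsUStrongLocalMin {n N : ℕ} (blk : Fin n → Fin N) (lam : Fin N → ℝ)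
    (f : EuclideanSpace ℝ (Fin n) → ℝ)
    (u : ∀ i : Fin N, EuclideanSpace ℝ {j : Fin n // blk j = i} →
      EuclideanSpace ℝ (Fin n) → ℝ)
    (z : EuclideanSpace ℝ (Fin n)) : Prop :=
  ∀ (i : Fin N) (y : EuclideanSpace ℝ {j : Fin n // blk j = i}),
    f z + l0norm blk lam z ≤
      u i y z + l0norm blk lam (z + blkEmbed blk i (y - blkProj blk i z))

/-- The separable quadratic approximation
`uᵢ^q(yᵢ;x,Mᵢ) = f(x) + ⟨∇ᵢf(x), yᵢ - xᵢ⟩ + (Mᵢ/2)‖yᵢ - xᵢ‖²`. -/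
noncomputable def uq {n N : ℕ} (blk : Fin n → Fin N)
    (f : EuclideanSpace ℝ (Fin n) → ℝ)
    (g : EuclideanSpace ℝ (Fin n) → EuclideanSpace ℝ (Fin n)) (M : Fin N → ℝ)
    (i : Fin N) (y : EuclideanSpace ℝ {j : Fin n // blk j = i})
    (x : EuclideanSpace ℝ (Fin n)) : ℝ :=
  f x + ⟪blkProj blk i (g x), y - blkProj blk i x⟫ + M i / 2 * ‖y - blkProj blk i x‖ ^ 2

/-!
Moving only the coordinate `j` of `z` inside its block, the block condition says that `c = z_j`
minimises `y ↦ a (y - c) + M/2 (y - c)² + λ‖y‖₀` on `ℝ`, where `a = ∇_{(j)} f(z)`. If `c ≠ 0` or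
`λ = 0`, the `ℓ₀` term is constant near `c`, so Fermat's rule gives `a = 0`. Comparing `c` with
`y = -a/M` when `c = 0`, and with `y = 0` when `c ≠ 0`, gives the two threshold bounds.
-/

/-- The scalar condition of the header, written in the increment `t = y - c`. -/
def IsCoordMin (a m lam c : ℝ) : Prop :=
  ∀ t : ℝ, (if c ≠ 0 then lam else 0) ≤ a * t + m / 2 * t ^ 2 + (if c + t ≠ 0 then lam else 0)

theorem eq_zero_of_isLocalMin_linear_add_quadratic {a b : ℝ}
    (h : IsLocalMin (fun t : ℝ => a * t + b * t ^ 2) 0) : a = 0 := by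
  have hderiv : HasDerivAt (fun t : ℝ => a * t + b * t ^ 2) a 0 := by
    simpa using
      ((hasDerivAt_id (0 : ℝ)).const_mul a).fun_add ((hasDerivAt_pow 2 (0 : ℝ)).const_mul b)
  exact h.hasDerivAt_eq_zero hderiv

namespace IsCoordMin

variable {a m lam c : ℝ}

theorem slope_eq_zero_of_ne (h : IsCoordMin a m lam c) (hc : c ≠ 0) : a = 0 := by
  apply eq_zero_of_isLocalMin_linear_add_quadratic (b := m / 2)
  have hnear : ∀ᶠ t in nhds (0 : ℝ), c + t ≠ 0 :=
    (continuous_const.add continuous_id).continuousAt.eventually_ne (by simpa using hc)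
  filter_upwards [hnear] with t ht
  simpa [hc, ht] using h t

theorem slope_eq_zero_of_lam_eq_zero (h : IsCoordMin a m lam c) (hlam : lam = 0) : a = 0 := by
  apply eq_zero_of_isLocalMin_linear_add_quadratic (b := m / 2)
  refine Filter.Eventually.of_forall fun t => ?_
  simpa [hlam] using h t

theorem abs_slope_le (hm : 0 < m) (h : IsCoordMin a m lam c) (hc : c = 0) :
    |a| ≤ Real.sqrt (2 * lam * m) := by
  rcases eq_or_ne a 0 with ha | ha
  · simp [ha]
  apply Real.abs_le_sqrt
  have hstep := h (-a / m)
  have hne : c + -a / m ≠ 0 := by simp [hc, ha, hm.ne']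
  rw [if_pos hne, if_neg (by simp [hc])] at hstep
  have hval : a * (-a / m) + m / 2 * (-a / m) ^ 2 = -(a ^ 2 / (2 * m)) := by
    field_simp
    ring
  have hle : a ^ 2 / (2 * m) ≤ lam := by linarith
  rw [div_le_iff₀ (by positivity)] at hle
  linarith

theorem sqrt_le_abs (hm : 0 < m) (h : IsCoordMin a m lam c) (hc : c ≠ 0) :
    Real.sqrt (2 * lam / m) ≤ |c| := by
  rw [Real.sqrt_le_left (abs_nonneg c), sq_abs, div_le_iff₀ hm]
  have hstep := h (-c)
  rw [h.slope_eq_zero_of_ne hc, if_pos hc, add_neg_cancel, if_neg (not_not.mpr rfl)] at hstep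
  nlinarith

end IsCoordMin

section Blocks

variable {n N : ℕ} (blk : Fin n → Fin N)

theorem blkEmbed_single (j : Fin n) (t : ℝ) :
    blkEmbed blk (blk j) (EuclideanSpace.single ⟨j, rfl⟩ t) = EuclideanSpace.single j t := by
  ext k
  by_cases hbk : blk k = blk j
  · simp [blkEmbed, hbk, Subtype.ext_iff]
  · simp [blkEmbed, hbk, show k ≠ j by rintro rfl; exact hbk rfl]

theorem l0norm_add_single (lam : Fin N → ℝ) (x : EuclideanSpace ℝ (Fin n)) (j : Fin n) (t : ℝ) :
    l0norm blk lam (x + EuclideanSpace.single j t) + (if x j ≠ 0 then lam (blk j) else 0) =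
      l0norm blk lam x + (if x j + t ≠ 0 then lam (blk j) else 0) := by
  unfold l0norm
  rw [← Finset.add_sum_erase _ _ (mem_univ j), ← Finset.add_sum_erase _ _ (mem_univ j)]
  have hrest : ∀ k ∈ univ.erase j, (x + EuclideanSpace.single j t) k = x k := fun k hk => by
    simp [ne_of_mem_erase hk]
  rw [Finset.sum_congr rfl fun k hk => by rw [hrest k hk]]
  simp only [PiLp.add_apply, PiLp.single_apply, if_true]
  ring

theorem uq_add_single (f : EuclideanSpace ℝ (Fin n) → ℝ)
    (g : EuclideanSpace ℝ (Fin n) → EuclideanSpace ℝ (Fin n)) (M : Fin N → ℝ)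
    (x : EuclideanSpace ℝ (Fin n)) (j : Fin n) (t : ℝ) :
    uq blk f g M (blk j) (blkProj blk (blk j) x + EuclideanSpace.single ⟨j, rfl⟩ t) x =
      f x + (g x j * t + M (blk j) / 2 * t ^ 2) := by
  simp [uq, blkProj, EuclideanSpace.inner_single_right, mul_comm, add_assoc]

variable {blk} in
theorem IsUStrongLocalMin.isCoordMin {lam : Fin N → ℝ} {f : EuclideanSpace ℝ (Fin n) → ℝ}
    {g : EuclideanSpace ℝ (Fin n) → EuclideanSpace ℝ (Fin n)} {M : Fin N → ℝ}
    {z : EuclideanSpace ℝ (Fin n)} (hz : IsUStrongLocalMin blk lam f (uq blk f g M) z)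
    (j : Fin n) : IsCoordMin (g z j) (M (blk j)) (lam (blk j)) (z j) := by
  intro t
  have hblock := hz (blk j) (blkProj blk (blk j) z + EuclideanSpace.single ⟨j, rfl⟩ t)
  rw [uq_add_single, add_sub_cancel_left, blkEmbed_single] at hblock
  linarith [l0norm_add_single blk lam z j t]

end Blocks

theorem statement5_general {n N : ℕ} (blk : Fin n → Fin N) (lam : Fin N → ℝ)
    (f : EuclideanSpace ℝ (Fin n) → ℝ)
    (g : EuclideanSpace ℝ (Fin n) → EuclideanSpace ℝ (Fin n))
    (L : Fin N → ℝ) (hL : ∀ i, 0 < L i)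
    (M : Fin N → ℝ) (hM : ∀ i, L i < M i)
    (z : EuclideanSpace ℝ (Fin n))
    (hz : IsUStrongLocalMin blk lam f (uq blk f g M) z) :
    (∀ j, InIset blk lam z j → g z j = 0) ∧
    (∀ j : Fin n,
      (z j = 0 → |g z j| ≤ Real.sqrt (2 * lam (blk j) * M (blk j))) ∧
      (z j ≠ 0 → Real.sqrt (2 * lam (blk j) / M (blk j)) ≤ |z j|)) := by
  have hMpos : ∀ i, 0 < M i := fun i => (hL i).trans (hM i)
  refine ⟨fun j hj => ?_, fun j =>
    ⟨(hz.isCoordMin j).abs_slope_le (hMpos _), (hz.isCoordMin j).sqrt_le_abs (hMpos _)⟩⟩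
  rcases hj with hzj | hlam0
  · exact (hz.isCoordMin j).slope_eq_zero_of_ne hzj
  · exact (hz.isCoordMin j).slope_eq_zero_of_lam_eq_zero hlam0

/-- Every `u^q`-strong local minimizer `z` satisfies
(i) `∇_{(j)} f(z) = 0` for `j ∈ I(z)`, and (ii) for `j ∈ 𝒮ᵢ`:
`|∇_{(j)} f(z)| ≤ √(2 λᵢ Mᵢ)` whenever `z_{(j)} = 0`, and `|z_{(j)}| ≥ √(2 λᵢ / Mᵢ)`
whenever `z_{(j)} ≠ 0`. -/
theorem statement5 {n N : ℕ} (blk : Fin n → Fin N) (lam : Fin N → ℝ)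
    (hlam : ∀ i, 0 ≤ lam i) (hlam_pos : ∃ i, 0 < lam i)
    (f : EuclideanSpace ℝ (Fin n) → ℝ)
    (g : EuclideanSpace ℝ (Fin n) → EuclideanSpace ℝ (Fin n))
    (hconv : ConvexOn ℝ Set.univ f)
    (hgrad : ∀ x, HasGradientAt f (g x) x)
    (L : Fin N → ℝ) (hL : ∀ i, 0 < L i)
    (hLip : ∀ (i : Fin N) (x : EuclideanSpace ℝ (Fin n))
      (h : EuclideanSpace ℝ {j : Fin n // blk j = i}),
      ‖blkProj blk i (g (x + blkEmbed blk i h)) - blkProj blk i (g x)‖ ≤ L i * ‖h‖)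
    (M : Fin N → ℝ) (hM : ∀ i, L i < M i)
    (z : EuclideanSpace ℝ (Fin n))
    (hz : IsUStrongLocalMin blk lam f (uq blk f g M) z) :
    (∀ j, InIset blk lam z j → g z j = 0) ∧
    (∀ j : Fin n,
      (z j = 0 → |g z j| ≤ Real.sqrt (2 * lam (blk j) * M (blk j))) ∧
      (z j ≠ 0 → Real.sqrt (2 * lam (blk j) / M (blk j)) ≤ |z j|)) :=
  statement5_general blk lam f g L hL M hM z hz
end

section
/- Let u satisfy Assumption 2 and suppose T^u_i(x) = argmin_{y_i ∈ ℝ^{n_i}} u_i(y_i;x) + λ_i‖y_i‖₀ is attained. Then for any x ∈ ℝⁿ, any i ∈ [N], and any index j in the support of T^u_i(x), one has |(T^u_i(x))_{(j)}|² ≥ 2λ_i / M_i. -/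
open scoped RealInnerProductSpace
open Finset

/-- The number of nonzero entries of a block vector, `‖yᵢ‖₀`, as a real number. -/
noncomputable def blkNnz {n N : ℕ} {blk : Fin n → Fin N} {i : Fin N}
    (v : EuclideanSpace ℝ {j : Fin n // blk j = i}) : ℝ :=
  ∑ j, if v j ≠ 0 then (1 : ℝ) else 0

/-! Zeroing the nonzero entry `z_j` of the minimizer `z = T^u_i(x)` lowers `‖z‖₀` by one, so
optimality gives `λᵢ ≤ uᵢ(z - z_j e_j; x) - uᵢ(z; x)`. Perturbations of `z` along `e_j` that are
small compared with `z_j` do not change the support, so `z` minimizes `uᵢ(·; x)` along that line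
and `∂_j uᵢ(z; x) = 0`; the descent lemma for the `Mᵢ`-Lipschitz gradient then bounds the
increase by `(Mᵢ/2) z_j²`. -/

section Gradient

variable {F : Type*} [NormedAddCommGroup F] [InnerProductSpace ℝ F] [CompleteSpace F]
  {f : F → ℝ}

theorem HasGradientAt.hasDerivAt_add_smul {g x v : F} {t : ℝ}
    (hf : HasGradientAt f g (x + t • v)) :
    HasDerivAt (fun s : ℝ => f (x + s • v)) ⟪g, v⟫ t := by
  have hline : HasDerivAt (fun s : ℝ => x + s • v) v t := by
    simpa using ((hasDerivAt_id t).smul_const v).const_add x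
  exact (hasGradientAt_iff_hasFDerivAt.mp hf).comp_hasDerivAt t hline

theorem IsLocalMin.inner_gradient_eq_zero {g x v : F} (hf : HasGradientAt f g x)
    (hmin : IsLocalMin (fun s : ℝ => f (x + s • v)) 0) : ⟪g, v⟫ = 0 :=
  hmin.hasDerivAt_eq_zero (HasGradientAt.hasDerivAt_add_smul (by simpa using hf))

theorem le_add_inner_add_of_lipschitz_gradient {f' : F → F} {M : ℝ}
    (hf : ∀ x, HasGradientAt f (f' x) x) (hlip : ∀ x y, ‖f' x - f' y‖ ≤ M * ‖x - y‖)
    (x y : F) : f y ≤ f x + ⟪f' x, y - x⟫ + M / 2 * ‖y - x‖ ^ 2 := by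
  set v := y - x
  set ψ : ℝ → ℝ := fun t => f (x + t • v) - t * ⟪f' x, v⟫ - M / 2 * t ^ 2 * ‖v‖ ^ 2
  have hψ : ∀ t, HasDerivAt ψ (⟪f' (x + t • v), v⟫ - ⟪f' x, v⟫ - M * t * ‖v‖ ^ 2) t := by
    intro t
    have hquad := ((hasDerivAt_pow 2 t).const_mul (M / 2)).mul_const (‖v‖ ^ 2)
    refine (((hf (x + t • v)).hasDerivAt_add_smul.sub
      ((hasDerivAt_id t).mul_const ⟪f' x, v⟫)).sub hquad).congr_deriv ?_
    simp only [Nat.cast_ofNat, Nat.add_one_sub_one, pow_one]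
    ring
  have hψ_nonpos : ∀ t, 0 ≤ t → ⟪f' (x + t • v), v⟫ - ⟪f' x, v⟫ - M * t * ‖v‖ ^ 2 ≤ 0 := by
    intro t ht
    have : ⟪f' (x + t • v), v⟫ - ⟪f' x, v⟫ ≤ M * t * ‖v‖ ^ 2 :=
      calc ⟪f' (x + t • v), v⟫ - ⟪f' x, v⟫ = ⟪f' (x + t • v) - f' x, v⟫ :=
            (inner_sub_left _ _ _).symm
        _ ≤ ‖f' (x + t • v) - f' x‖ * ‖v‖ := real_inner_le_norm _ _
        _ ≤ M * ‖t • v‖ * ‖v‖ := by gcongr; simpa using hlip (x + t • v) x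
        _ = M * t * ‖v‖ ^ 2 := by rw [norm_smul, Real.norm_of_nonneg ht]; ring
    linarith
  have hanti : AntitoneOn ψ (Set.Ici 0) :=
    antitoneOn_of_hasDerivWithinAt_nonpos (convex_Ici 0)
      (fun t _ => (hψ t).continuousAt.continuousWithinAt)
      (fun t _ => (hψ t).hasDerivWithinAt)
      (fun t ht => hψ_nonpos t (le_of_lt (by simpa using ht)))
  have h10 : ψ 1 ≤ ψ 0 := hanti Set.self_mem_Ici (Set.mem_Ici.mpr zero_le_one) zero_le_one
  simp only [ψ, v, one_smul, add_sub_cancel, zero_smul, add_zero] at h10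
  linarith

end Gradient

section Block

variable {n N : ℕ} {blk : Fin n → Fin N} {i : Fin N}

theorem blkNnz_add_smul_single (v : EuclideanSpace ℝ {j : Fin n // blk j = i})
    (j : {j : Fin n // blk j = i}) (t : ℝ) :
    blkNnz (v + t • EuclideanSpace.single j 1) =
      blkNnz v + (if v j + t ≠ 0 then 1 else 0) - (if v j ≠ 0 then 1 else 0) := by
  have hoff : ∀ k ∈ univ.erase j,
      (v + t • EuclideanSpace.single j (1 : ℝ) : EuclideanSpace ℝ _) k = v k := by
    intro k hk
    simp [ne_of_mem_erase hk]
  unfold blkNnz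
  rw [← add_sum_erase _ _ (mem_univ j), ← add_sum_erase _ _ (mem_univ j),
    sum_congr rfl fun k hk => by rw [hoff k hk]]
  simp only [PiLp.add_apply, PiLp.smul_apply, PiLp.single_apply, if_true, smul_eq_mul, mul_one]
  ring

theorem two_mul_le_mul_sq_of_minimizes_add_blkNnz
    {φ : EuclideanSpace ℝ {j : Fin n // blk j = i} → ℝ}
    {φ' : EuclideanSpace ℝ {j : Fin n // blk j = i} → EuclideanSpace ℝ {j : Fin n // blk j = i}}
    {M lam : ℝ} (hφ : ∀ v, HasGradientAt φ (φ' v) v)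
    (hlip : ∀ v w, ‖φ' v - φ' w‖ ≤ M * ‖v - w‖) {z : EuclideanSpace ℝ {j : Fin n // blk j = i}}
    (hz : ∀ y, φ z + lam * blkNnz z ≤ φ y + lam * blkNnz y)
    {j : {j : Fin n // blk j = i}} (hj : z j ≠ 0) :
    2 * lam ≤ M * z j ^ 2 := by
  set e : EuclideanSpace ℝ {j : Fin n // blk j = i} := EuclideanSpace.single j 1
  have hmin : IsLocalMin (fun t : ℝ => φ (z + t • e)) 0 := by
    have hnear : ∀ᶠ t in nhds (0 : ℝ), z j + t ≠ 0 :=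
      (continuous_const.add continuous_id).continuousAt.eventually_ne (by simpa using hj)
    filter_upwards [hnear] with t ht
    have h := hz (z + t • e)
    rw [blkNnz_add_smul_single, if_pos ht, if_pos hj, add_sub_cancel_right] at h
    simpa using h
  have hcrit : ⟪φ' z, e⟫ = 0 := hmin.inner_gradient_eq_zero (hφ z)
  have hdesc := le_add_inner_add_of_lipschitz_gradient hφ hlip z (z + (-z j) • e)
  rw [add_sub_cancel_left, inner_smul_right, hcrit, norm_smul, PiLp.norm_single] at hdesc
  have hopt := hz (z + (-z j) • e)
  rw [blkNnz_add_smul_single, if_neg (by simp), if_pos hj] at hopt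
  simp only [norm_one, mul_one, Real.norm_eq_abs, sq_abs, mul_zero, add_zero] at hdesc
  linarith

end Block

theorem statement9_general {n N : ℕ} (blk : Fin n → Fin N) (lam : Fin N → ℝ)
    (f : EuclideanSpace ℝ (Fin n) → ℝ)
    (g : EuclideanSpace ℝ (Fin n) → EuclideanSpace ℝ (Fin n))
    (L : Fin N → ℝ) (hL : ∀ i, 0 < L i)
    (u : ∀ i : Fin N, EuclideanSpace ℝ {j : Fin n // blk j = i} →
      EuclideanSpace ℝ (Fin n) → ℝ)
    (gu : ∀ i : Fin N, EuclideanSpace ℝ {j : Fin n // blk j = i} →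
      EuclideanSpace ℝ (Fin n) → EuclideanSpace ℝ {j : Fin n // blk j = i})
    (M μ : Fin N → ℝ)
    (hu : ApproxAssumption blk f g L u gu M μ)
    (T : ∀ i : Fin N, EuclideanSpace ℝ (Fin n) →
      EuclideanSpace ℝ {j : Fin n // blk j = i})
    (hT : ∀ (i : Fin N) (x : EuclideanSpace ℝ (Fin n))
      (y : EuclideanSpace ℝ {j : Fin n // blk j = i}),
      u i (T i x) x + lam i * blkNnz (T i x) ≤ u i y x + lam i * blkNnz y) :
    ∀ (x : EuclideanSpace ℝ (Fin n)) (i : Fin N)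
      (j : {j : Fin n // blk j = i}), T i x j ≠ 0 →
      2 * lam i / M i ≤ (T i x j) ^ 2 := by
  intro x i j hj
  have hM : 0 < M i := (hL i).trans (hu.M_gt_L i)
  rw [div_le_iff₀ hM, mul_comm (_ ^ 2)]
  exact two_mul_le_mul_sq_of_minimizes_add_blkNnz (hu.hasGradient i x) (hu.lipschitz_grad i x)
    (hT i x) hj

/-- Every nonzero component of the thresholding map `T^u_i(x)` satisfies
`|(T^u_i(x))_{(j)}|² ≥ 2λᵢ/Mᵢ`. -/
theorem statement9 {n N : ℕ} (blk : Fin n → Fin N) (lam : Fin N → ℝ)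
    (hlam : ∀ i, 0 ≤ lam i)
    (f : EuclideanSpace ℝ (Fin n) → ℝ)
    (g : EuclideanSpace ℝ (Fin n) → EuclideanSpace ℝ (Fin n))
    (L : Fin N → ℝ) (hL : ∀ i, 0 < L i)
    (u : ∀ i : Fin N, EuclideanSpace ℝ {j : Fin n // blk j = i} →
      EuclideanSpace ℝ (Fin n) → ℝ)
    (gu : ∀ i : Fin N, EuclideanSpace ℝ {j : Fin n // blk j = i} →
      EuclideanSpace ℝ (Fin n) → EuclideanSpace ℝ {j : Fin n // blk j = i})
    (M μ : Fin N → ℝ)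
    (hu : ApproxAssumption blk f g L u gu M μ)
    (T : ∀ i : Fin N, EuclideanSpace ℝ (Fin n) →
      EuclideanSpace ℝ {j : Fin n // blk j = i})
    (hT : ∀ (i : Fin N) (x : EuclideanSpace ℝ (Fin n))
      (y : EuclideanSpace ℝ {j : Fin n // blk j = i}),
      u i (T i x) x + lam i * blkNnz (T i x) ≤ u i y x + lam i * blkNnz y) :
    ∀ (x : EuclideanSpace ℝ (Fin n)) (i : Fin N)
      (j : {j : Fin n // blk j = i}), T i x j ≠ 0 →
      2 * lam i / M i ≤ (T i x j) ^ 2 :=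
  statement9_general blk lam f g L hL u gu M μ hu T hT
end

section
/- Let f satisfy Assumption 1 and u satisfy Assumption 2, and let (x^k) be the sequence generated by the RCD-IHT algorithm from x⁰ ∈ ℝⁿ. If at iteration k a change of I^k = I(x^k) in expectation occurs, i.e. E[|I^{k+1} \ I^k| + |I^k \ I^{k+1}| | x^k] > 0, then E[(μ_{i_k}/2)‖x^{k+1} − x^k‖² | x^k] ≥ δ, where δ = (1/N) · min{ min_{i : λ_i > 0} μ_i λ_i / M_i, min_{i ∈ [N], j ∈ 𝒮_i ∩ supp(x⁰)} (μ_i/2)|x⁰_{(j)}|² } > 0. -/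
/-!
If a block minimizer `y = T^u_i(x)` of `uᵢ(·;x) + λᵢ‖·‖₀` has a nonzero entry `t`, then
`λᵢ ≤ (Mᵢ/2) t²`: the partial derivative of `uᵢ` in that coordinate vanishes (small moves keep
the support), so by the descent lemma zeroing the entry raises `uᵢ` by at most `(Mᵢ/2) t²`,
while it lowers the penalty by `λᵢ`. Every entry of an iterate is either an entry of `x⁰` or
such a freshly computed entry, so every nonzero entry `t` of block `i` of any iterate with
`λᵢ > 0` has `(μᵢ/2) t² ≥ N δ`. A change of `I(xᵏ)` under the update of block `i` means that
such an entry switches between zero and nonzero, so `(μᵢ/2)‖T^u_i(xᵏ) - xᵏᵢ‖² ≥ N δ`, and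
averaging over the blocks gives the claim.
-/

open scoped RealInnerProductSpace
open Finset

/-- One iteration of the (RCD-IHT) method: block `i` of `x` is replaced by `T i x`. -/
noncomputable def rcdStep {n N : ℕ} (blk : Fin n → Fin N)
    (T : ∀ i : Fin N, EuclideanSpace ℝ (Fin n) →
      EuclideanSpace ℝ {j : Fin n // blk j = i})
    (i : Fin N) (x : EuclideanSpace ℝ (Fin n)) : EuclideanSpace ℝ (Fin n) :=
  x + blkEmbed blk i (T i x - blkProj blk i x)

/-- The index set `I(x) = supp(x) ∪ {j ∈ 𝒮ᵢ : λᵢ = 0}` as a set. -/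
def IsetOf {n N : ℕ} (blk : Fin n → Fin N) (lam : Fin N → ℝ)
    (x : EuclideanSpace ℝ (Fin n)) : Set (Fin n) :=
  {j | x j ≠ 0 ∨ lam (blk j) = 0}

section Descent

variable {E : Type*} [NormedAddCommGroup E] [InnerProductSpace ℝ E] [CompleteSpace E]
  {u : E → ℝ} {gu : E → E} {K : ℝ}

theorem le_add_inner_add_of_lipschitz_gradient_s11 (hu : ∀ v, HasGradientAt u (gu v) v)
    (hK : ∀ v w, ‖gu v - gu w‖ ≤ K * ‖v - w‖) (y h : E) :
    u (y + h) ≤ u y + ⟪gu y, h⟫ + K / 2 * ‖h‖ ^ 2 := by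
  set ψ : ℝ → ℝ := fun t => u (y + t • h) - t * ⟪gu y, h⟫ - K / 2 * ‖h‖ ^ 2 * t ^ 2
  have hψ : ∀ t, HasDerivAt ψ (⟪gu (y + t • h) - gu y, h⟫ - K * ‖h‖ ^ 2 * t) t := by
    intro t
    have hline : HasDerivAt (fun s : ℝ => y + s • h) h t := by
      simpa using ((hasDerivAt_id t).smul_const h).const_add y
    have := (((hu _).hasFDerivAt.comp_hasDerivAt t hline).sub
      ((hasDerivAt_id t).mul_const ⟪gu y, h⟫)).sub
      ((hasDerivAt_pow 2 t).const_mul (K / 2 * ‖h‖ ^ 2))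
    refine this.congr_deriv ?_
    simp only [InnerProductSpace.toDual_apply_apply, inner_sub_left]
    ring
  have hψ' : ∀ t ∈ interior (Set.Icc (0 : ℝ) 1),
      ⟪gu (y + t • h) - gu y, h⟫ - K * ‖h‖ ^ 2 * t ≤ 0 := by
    intro t ht
    rw [interior_Icc] at ht
    have hlip : ‖gu (y + t • h) - gu y‖ ≤ K * (t * ‖h‖) := by
      simpa [norm_smul, abs_of_pos ht.1] using hK (y + t • h) y
    nlinarith [real_inner_le_norm (gu (y + t • h) - gu y) h, norm_nonneg h]
  have hanti : AntitoneOn ψ (Set.Icc 0 1) :=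
    antitoneOn_of_hasDerivWithinAt_nonpos (convex_Icc 0 1)
      (fun t _ => (hψ t).continuousAt.continuousWithinAt)
      (fun t _ => (hψ t).hasDerivWithinAt) hψ'
  have := hanti (by norm_num : (0 : ℝ) ∈ Set.Icc 0 1) (by norm_num : (1 : ℝ) ∈ Set.Icc 0 1)
    zero_le_one
  norm_num [ψ] at this
  linarith

end Descent

section Sparsity

variable {m : Type*} [Fintype m] [DecidableEq m]

noncomputable def nnz (v : EuclideanSpace ℝ m) : ℝ :=
  ∑ j, if v j ≠ 0 then 1 else 0

theorem nnz_add_single (y : EuclideanSpace ℝ m) (j : m) (t : ℝ) :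
    nnz (y + EuclideanSpace.single j t) + (if y j ≠ 0 then 1 else 0) =
      nnz y + (if y j + t ≠ 0 then 1 else 0) := by
  have hoff : ∀ j' ∈ univ.erase j, (y + EuclideanSpace.single j t) j' = y j' := fun j' hj' => by
    simp [(mem_erase.mp hj').1]
  unfold nnz
  rw [← add_sum_erase _ _ (mem_univ j), ← add_sum_erase _ _ (mem_univ j),
    sum_congr rfl fun j' hj' => by rw [hoff j' hj']]
  simp only [PiLp.add_apply, PiLp.single_apply, if_true]
  ring

theorem hasDerivAt_add_single (y : EuclideanSpace ℝ m) (j : m) (t : ℝ) :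
    HasDerivAt (fun s => y + EuclideanSpace.single j s) (EuclideanSpace.single j 1) t := by
  have hline : (fun s => y + EuclideanSpace.single j s) =
      fun s : ℝ => y + s • EuclideanSpace.single j 1 := by
    ext s j'
    simp [PiLp.single_apply]
  rw [hline]
  simpa using ((hasDerivAt_id t).smul_const (EuclideanSpace.single j (1 : ℝ))).const_add y

theorem le_half_mul_sq_of_minimizes_add_nnz {u : EuclideanSpace ℝ m → ℝ}
    {gu : EuclideanSpace ℝ m → EuclideanSpace ℝ m} {K lam : ℝ}
    (hu : ∀ v, HasGradientAt u (gu v) v) (hK : ∀ v w, ‖gu v - gu w‖ ≤ K * ‖v - w‖)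
    {y : EuclideanSpace ℝ m} (hy : ∀ z, u y + lam * nnz y ≤ u z + lam * nnz z)
    {j : m} (hj : y j ≠ 0) :
    lam ≤ K / 2 * y j ^ 2 := by
  have hcoord : gu y j = 0 := by
    have hzero : EuclideanSpace.single j (0 : ℝ) = 0 := by simp
    have hderiv : HasDerivAt (fun t => u (y + EuclideanSpace.single j t)) (gu y j) 0 := by
      have := (hu _).hasFDerivAt.comp_hasDerivAt (0 : ℝ) (hasDerivAt_add_single y j 0)
      simpa [EuclideanSpace.inner_single_right, hzero, Function.comp_def] using this
    -- moving `y j` by less than `|y j|` keeps the support, hence the penalty, unchanged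
    have hmin : IsLocalMin (fun t => u (y + EuclideanSpace.single j t)) 0 := by
      filter_upwards [Metric.ball_mem_nhds (0 : ℝ) (abs_pos.mpr hj)] with t ht
      have hne : y j + t ≠ 0 := by
        rw [Metric.mem_ball, Real.dist_0_eq_abs] at ht
        intro h
        rw [show t = -y j by linarith, abs_neg] at ht
        exact lt_irrefl _ ht
      have hcount := nnz_add_single y j t
      have := hy (y + EuclideanSpace.single j t)
      simp only [ne_eq, hj, hne, not_false_eq_true, if_true] at hcount
      rw [show nnz (y + EuclideanSpace.single j t) = nnz y by linarith] at this
      simp only [hzero, add_zero]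
      linarith
    exact hmin.hasDerivAt_eq_zero hderiv
  have hdesc := le_add_inner_add_of_lipschitz_gradient_s11 hu hK y (EuclideanSpace.single j (-y j))
  have hcount := nnz_add_single y j (-y j)
  have hmin := hy (y + EuclideanSpace.single j (-y j))
  simp only [EuclideanSpace.inner_single_right, hcoord, PiLp.norm_single, Real.norm_eq_abs,
    sq_abs, neg_sq, map_zero, mul_zero, add_zero] at hdesc
  simp only [ne_eq, hj, add_neg_cancel, not_true_eq_false, not_false_eq_true, if_true,
    if_false] at hcount
  rw [show nnz (y + EuclideanSpace.single j (-y j)) = nnz y - 1 by linarith] at hmin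
  linarith

end Sparsity

theorem EuclideanSpace.sq_apply_le_norm_sq {ι : Type*} [Fintype ι] (v : EuclideanSpace ℝ ι)
    (j : ι) : v j ^ 2 ≤ ‖v‖ ^ 2 := by
  simpa [Real.norm_eq_abs, sq_abs] using pow_le_pow_left₀ (norm_nonneg _) (PiLp.norm_apply_le v j) 2

theorem Set.finite_setOf_exists_and_eq {ι α : Type*} [Finite ι] (p : ι → Prop) (f : ι → α) :
    {t | ∃ i, p i ∧ t = f i}.Finite :=
  (Set.finite_range f).subset <| by rintro _ ⟨i, -, rfl⟩; exact ⟨i, rfl⟩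

section RCDIHT

variable {n N : ℕ} {blk : Fin n → Fin N}

theorem ApproxAssumption.mul_div_le_half_mul_sq {f : EuclideanSpace ℝ (Fin n) → ℝ}
    {g : EuclideanSpace ℝ (Fin n) → EuclideanSpace ℝ (Fin n)} {L M μ : Fin N → ℝ}
    {u : ∀ i : Fin N, EuclideanSpace ℝ {j : Fin n // blk j = i} → EuclideanSpace ℝ (Fin n) → ℝ}
    {gu : ∀ i : Fin N, EuclideanSpace ℝ {j : Fin n // blk j = i} →
      EuclideanSpace ℝ (Fin n) → EuclideanSpace ℝ {j : Fin n // blk j = i}}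
    (hu : ApproxAssumption blk f g L u gu M μ) {i : Fin N} (hM : 0 < M i)
    {x : EuclideanSpace ℝ (Fin n)} {lam : ℝ} {y : EuclideanSpace ℝ {j : Fin n // blk j = i}}
    (hy : ∀ z, u i y x + lam * blkNnz y ≤ u i z x + lam * blkNnz z)
    {j : {j : Fin n // blk j = i}} (hj : y j ≠ 0) :
    μ i * lam / M i ≤ μ i / 2 * y j ^ 2 := by
  have := le_half_mul_sq_of_minimizes_add_nnz (hu.hasGradient i x) (hu.lipschitz_grad i x) hy hj
  rw [div_le_iff₀ hM]
  nlinarith [hu.mu_pos i]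

variable {T : ∀ i : Fin N, EuclideanSpace ℝ (Fin n) → EuclideanSpace ℝ {j : Fin n // blk j = i}}

theorem rcdStep_apply (i : Fin N) (x : EuclideanSpace ℝ (Fin n)) (j : Fin n) :
    rcdStep blk T i x j = if h : blk j = i then T i x ⟨j, h⟩ else x j := by
  simp only [rcdStep, blkEmbed, blkProj, PiLp.add_apply, PiLp.sub_apply]
  split_ifs <;> simp

theorem rcd_iterate_invariant (Q : Fin n → ℝ → Prop)
    (hT : ∀ i x (j : {j : Fin n // blk j = i}), Q j (T i x j))
    {idx : ℕ → Fin N} {xs : ℕ → EuclideanSpace ℝ (Fin n)} (h0 : ∀ j, Q j (xs 0 j))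
    (hxs : ∀ k, xs (k + 1) = rcdStep blk T (idx k) (xs k)) (k : ℕ) (j : Fin n) :
    Q j (xs k j) := by
  induction k with
  | zero => exact h0 j
  | succ k ih =>
    rw [hxs, rcdStep_apply]
    split_ifs with h
    · exact hT _ _ ⟨j, h⟩
    · exact ih

theorem exists_coord_of_IsetOf_rcdStep_ne {lam : Fin N → ℝ} (hlam : ∀ i, 0 ≤ lam i)
    {i : Fin N} {x : EuclideanSpace ℝ (Fin n)}
    (h : IsetOf blk lam (rcdStep blk T i x) ≠ IsetOf blk lam x) :
    ∃ j : {j : Fin n // blk j = i}, 0 < lam i ∧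
      (x j = 0 ∧ T i x j ≠ 0 ∨ x j ≠ 0 ∧ T i x j = 0) := by
  contrapose! h
  ext j
  simp only [IsetOf, Set.mem_ofPred_eq, rcdStep_apply]
  split_ifs with hj
  · subst hj
    rcases (hlam (blk j)).eq_or_lt with hl | hl
    · simp [← hl]
    · obtain ⟨h₁, h₂⟩ := h ⟨j, rfl⟩ hl
      by_cases hx : x j = 0 <;> simp_all
  · rfl

theorem le_half_mul_norm_sq_of_IsetOf_rcdStep_ne {lam μ : Fin N → ℝ} (hlam : ∀ i, 0 ≤ lam i)
    {c : ℝ} {i : Fin N} {x : EuclideanSpace ℝ (Fin n)} (hμ : 0 ≤ μ i)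
    (hT : ∀ j : {j : Fin n // blk j = i},
      0 < lam (blk j) → T i x j ≠ 0 → c ≤ μ (blk j) / 2 * T i x j ^ 2)
    (hx : ∀ j, 0 < lam (blk j) → x j ≠ 0 → c ≤ μ (blk j) / 2 * x j ^ 2)
    (h : IsetOf blk lam (rcdStep blk T i x) ≠ IsetOf blk lam x) :
    c ≤ μ i / 2 * ‖T i x - blkProj blk i x‖ ^ 2 := by
  obtain ⟨⟨j, rfl⟩, hl, hjump⟩ := exists_coord_of_IsetOf_rcdStep_ne hlam h
  have hcoord : (T (blk j) x ⟨j, rfl⟩ - x j) ^ 2 ≤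
      ‖T (blk j) x - blkProj blk (blk j) x‖ ^ 2 := by
    simpa [blkProj] using
      EuclideanSpace.sq_apply_le_norm_sq (T (blk j) x - blkProj blk (blk j) x) ⟨j, rfl⟩
  rcases hjump with ⟨hx0, hTj⟩ | ⟨hxj, hT0⟩
  · rw [hx0, sub_zero] at hcoord
    exact (hT _ hl hTj).trans (by gcongr)
  · rw [hT0, zero_sub, neg_sq] at hcoord
    exact (hx j hl hxj).trans (by gcongr)

end RCDIHT

theorem statement11_general {n N : ℕ} (blk : Fin n → Fin N) (lam : Fin N → ℝ)
    (hlam : ∀ i, 0 ≤ lam i) (hlam_pos : ∃ i, 0 < lam i)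
    (f : EuclideanSpace ℝ (Fin n) → ℝ)
    (g : EuclideanSpace ℝ (Fin n) → EuclideanSpace ℝ (Fin n))
    (L : Fin N → ℝ) (hL : ∀ i, 0 < L i)
    (u : ∀ i : Fin N, EuclideanSpace ℝ {j : Fin n // blk j = i} →
      EuclideanSpace ℝ (Fin n) → ℝ)
    (gu : ∀ i : Fin N, EuclideanSpace ℝ {j : Fin n // blk j = i} →
      EuclideanSpace ℝ (Fin n) → EuclideanSpace ℝ {j : Fin n // blk j = i})
    (M μ : Fin N → ℝ)
    (hu : ApproxAssumption blk f g L u gu M μ)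
    (T : ∀ i : Fin N, EuclideanSpace ℝ (Fin n) →
      EuclideanSpace ℝ {j : Fin n // blk j = i})
    (hT : ∀ (i : Fin N) (x : EuclideanSpace ℝ (Fin n))
      (y : EuclideanSpace ℝ {j : Fin n // blk j = i}),
      u i (T i x) x + lam i * blkNnz (T i x) ≤ u i y x + lam i * blkNnz y)
    -- a realization of the (RCD-IHT) sequence generated from `x0`
    (x0 : EuclideanSpace ℝ (Fin n)) (idx : ℕ → Fin N)
    (xs : ℕ → EuclideanSpace ℝ (Fin n))
    (hxs0 : xs 0 = x0)
    (hxs : ∀ k, xs (k + 1) = rcdStep blk T (idx k) (xs k))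
    (k : ℕ)
    -- a change of `Iᵏ` in expectation occurs at iteration `k`
    (hchg : 0 < (1 / N : ℝ) * ∑ i : Fin N,
      (((IsetOf blk lam (rcdStep blk T i (xs k)) \ IsetOf blk lam (xs k)).ncard : ℝ) +
        ((IsetOf blk lam (xs k) \ IsetOf blk lam (rcdStep blk T i (xs k))).ncard : ℝ)))
    (δ : ℝ)
    (hδ : δ = (1 / N : ℝ) * sInf
      ({t : ℝ | ∃ i, 0 < lam i ∧ t = μ i * lam i / M i} ∪
       {t : ℝ | ∃ j, x0 j ≠ 0 ∧ t = μ (blk j) / 2 * (x0 j) ^ 2})) :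
    0 < δ ∧
      δ ≤ (1 / N : ℝ) * ∑ i : Fin N, μ i / 2 * ‖T i (xs k) - blkProj blk i (xs k)‖ ^ 2 := by
  obtain ⟨i₀, hi₀⟩ := hlam_pos
  have hN : (0 : ℝ) < 1 / N := by have := i₀.pos; positivity
  have hM : ∀ i, 0 < M i := fun i => (hL i).trans (hu.M_gt_L i)
  set S : Set ℝ := {t : ℝ | ∃ i, 0 < lam i ∧ t = μ i * lam i / M i} ∪
    {t : ℝ | ∃ j, x0 j ≠ 0 ∧ t = μ (blk j) / 2 * (x0 j) ^ 2}
  have hS_fin : S.Finite :=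
    (Set.finite_setOf_exists_and_eq _ _).union (Set.finite_setOf_exists_and_eq _ _)
  have hc_le : ∀ t ∈ S, sInf S ≤ t := fun t ht => csInf_le hS_fin.bddBelow ht
  have hc_pos : 0 < sInf S := by
    refine (hS_fin.lt_csInf_iff ⟨_, Or.inl ⟨i₀, hi₀, rfl⟩⟩).2 ?_
    rintro _ (⟨i, hli, rfl⟩ | ⟨j, hj, rfl⟩)
    · exact div_pos (mul_pos (hu.mu_pos i) hli) (hM i)
    · have := hu.mu_pos (blk j); positivity
  have hT_large : ∀ i x (j : {j : Fin n // blk j = i}),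
      0 < lam (blk j) → T i x j ≠ 0 → sInf S ≤ μ (blk j) / 2 * T i x j ^ 2 := by
    rintro _ x ⟨j, rfl⟩ hl hj
    exact (hc_le _ (Or.inl ⟨_, hl, rfl⟩)).trans (hu.mul_div_le_half_mul_sq (hM _) (hT _ x) hj)
  have hxs_large := rcd_iterate_invariant
    (fun j t => 0 < lam (blk j) → t ≠ 0 → sInf S ≤ μ (blk j) / 2 * t ^ 2) hT_large
    (fun j _ hj => by rw [hxs0] at hj ⊢; exact hc_le _ (Or.inr ⟨j, hj, rfl⟩)) hxs k
  obtain ⟨i, hi⟩ : ∃ i, IsetOf blk lam (rcdStep blk T i (xs k)) ≠ IsetOf blk lam (xs k) := by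
    by_contra! h
    simp [h] at hchg
  refine ⟨hδ ▸ mul_pos hN hc_pos, hδ ▸ mul_le_mul_of_nonneg_left ?_ hN.le⟩
  calc sInf S ≤ μ i / 2 * ‖T i (xs k) - blkProj blk i (xs k)‖ ^ 2 :=
        le_half_mul_norm_sq_of_IsetOf_rcdStep_ne hlam (hu.mu_pos i).le (hT_large i _) hxs_large hi
    _ ≤ ∑ i, μ i / 2 * ‖T i (xs k) - blkProj blk i (xs k)‖ ^ 2 := by
      refine single_le_sum (f := fun i => μ i / 2 * ‖T i (xs k) - blkProj blk i (xs k)‖ ^ 2)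
        (fun i _ => ?_) (mem_univ i)
      have := hu.mu_pos i
      positivity

/-- If at iteration `k` of (RCD-IHT) a change of `Iᵏ` in expectation
occurs, i.e. `E[|Iᵏ⁺¹ \ Iᵏ| + |Iᵏ \ Iᵏ⁺¹| | xᵏ] > 0`, then
`E[(μ_{i_k}/2)‖xᵏ⁺¹ - xᵏ‖² | xᵏ] = (1/N) ∑ᵢ (μᵢ/2)‖T^u_i(xᵏ) - xᵏᵢ‖² ≥ δ > 0`. -/
theorem statement11 {n N : ℕ} (blk : Fin n → Fin N) (lam : Fin N → ℝ)
    (hlam : ∀ i, 0 ≤ lam i) (hlam_pos : ∃ i, 0 < lam i)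
    (f : EuclideanSpace ℝ (Fin n) → ℝ)
    (g : EuclideanSpace ℝ (Fin n) → EuclideanSpace ℝ (Fin n))
    (hconv : ConvexOn ℝ Set.univ f)
    (hgrad : ∀ x, HasGradientAt f (g x) x)
    (L : Fin N → ℝ) (hL : ∀ i, 0 < L i)
    (hLip : ∀ (i : Fin N) (x : EuclideanSpace ℝ (Fin n))
      (h : EuclideanSpace ℝ {j : Fin n // blk j = i}),
      ‖blkProj blk i (g (x + blkEmbed blk i h)) - blkProj blk i (g x)‖ ≤ L i * ‖h‖)
    (u : ∀ i : Fin N, EuclideanSpace ℝ {j : Fin n // blk j = i} →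
      EuclideanSpace ℝ (Fin n) → ℝ)
    (gu : ∀ i : Fin N, EuclideanSpace ℝ {j : Fin n // blk j = i} →
      EuclideanSpace ℝ (Fin n) → EuclideanSpace ℝ {j : Fin n // blk j = i})
    (M μ : Fin N → ℝ)
    (hu : ApproxAssumption blk f g L u gu M μ)
    (T : ∀ i : Fin N, EuclideanSpace ℝ (Fin n) →
      EuclideanSpace ℝ {j : Fin n // blk j = i})
    (hT : ∀ (i : Fin N) (x : EuclideanSpace ℝ (Fin n))
      (y : EuclideanSpace ℝ {j : Fin n // blk j = i}),
      u i (T i x) x + lam i * blkNnz (T i x) ≤ u i y x + lam i * blkNnz y)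
    -- a realization of the (RCD-IHT) sequence generated from `x0`
    (x0 : EuclideanSpace ℝ (Fin n)) (idx : ℕ → Fin N)
    (xs : ℕ → EuclideanSpace ℝ (Fin n))
    (hxs0 : xs 0 = x0)
    (hxs : ∀ k, xs (k + 1) = rcdStep blk T (idx k) (xs k))
    (k : ℕ)
    -- a change of `Iᵏ` in expectation occurs at iteration `k`
    (hchg : 0 < (1 / N : ℝ) * ∑ i : Fin N,
      (((IsetOf blk lam (rcdStep blk T i (xs k)) \ IsetOf blk lam (xs k)).ncard : ℝ) +
        ((IsetOf blk lam (xs k) \ IsetOf blk lam (rcdStep blk T i (xs k))).ncard : ℝ)))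
    (δ : ℝ)
    (hδ : δ = (1 / N : ℝ) * sInf
      ({t : ℝ | ∃ i, 0 < lam i ∧ t = μ i * lam i / M i} ∪
       {t : ℝ | ∃ j, x0 j ≠ 0 ∧ t = μ (blk j) / 2 * (x0 j) ^ 2})) :
    0 < δ ∧
      δ ≤ (1 / N : ℝ) * ∑ i : Fin N, μ i / 2 * ‖T i (xs k) - blkProj blk i (xs k)‖ ^ 2 :=
  statement11_general blk lam hlam hlam_pos f g L hL u gu M μ hu T hT x0 idx xs hxs0 hxs k hchg δ hδ
end
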